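/- arXiv:2605.31237 — 4 statements merged into one kernel-verified Lean document; each statement's English description precedes it below -/
import Mathlib

section
/- For all y, z : ℤ → {0,1}, the function g_{y,z} : ℤ² → ℤ² is injective. -/
/-- Signed sum of `f` over the integer interval `[0, b)` (negated if `b < 0`). -/
noncomputable def sgnSum (f : ℤ → ℤ) (b : ℤ) : ℤ :=
  (∑ k ∈ Finset.Ico (0 : ℤ) b, f k) - (∑ k ∈ Finset.Ico b (0 : ℤ), f k)

/-- The wobbling map `g_{y,z}(a,b) = (a + Σ z over [0,b), b - Σ y over [0,a))`. -/
noncomputable def gfun (y z : ℤ → ℤ) (p : ℤ × ℤ) : ℤ × ℤ :=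
  (p.1 + sgnSum z p.2, p.2 - sgnSum y p.1)

/-! Since `y, z ≥ 0`, the signed partial sums `Y, Z` are monotone and `g(a, b) = (a + Z b, b - Y a)`.
If two points with `a ≤ a'` have the same image, then `b' - b = Y a' - Y a ≥ 0`, hence
`a - a' = Z b' - Z b ≥ 0`, so `a = a'` and then `b = b'`. -/

theorem injective_add_sub_of_monotone {α : Type*} [AddCommGroup α] [LinearOrder α]
    [IsOrderedAddMonoid α] {Y Z : α → α} (hY : Monotone Y) (hZ : Monotone Z) :
    Function.Injective fun p : α × α => (p.1 + Z p.2, p.2 - Y p.1) := by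
  suffices key : ∀ a b a' b' : α, a ≤ a' → a + Z b = a' + Z b' → b - Y a = b' - Y a' →
      a = a' ∧ b = b' by
    rintro ⟨a, b⟩ ⟨a', b'⟩ h
    simp only [Prod.mk.injEq] at h ⊢
    rcases le_total a a' with ha | ha
    · exact key a b a' b' ha h.1 h.2
    · obtain ⟨rfl, rfl⟩ := key a' b' a b ha h.1.symm h.2.symm
      exact ⟨rfl, rfl⟩
  intro a b a' b' ha h₁ h₂
  have hb : b ≤ b' := by
    refine (sub_le_sub_iff_right (Y a)).1 ?_
    calc b - Y a = b' - Y a' := h₂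
      _ ≤ b' - Y a := sub_le_sub_left (hY ha) b'
  have ha' : a' ≤ a := by
    refine (add_le_add_iff_right (Z b)).1 ?_
    calc a' + Z b ≤ a' + Z b' := add_le_add_right (hZ hb) a'
      _ = a + Z b := h₁.symm
  obtain rfl := le_antisymm ha ha'
  exact ⟨rfl, by simpa using h₂⟩

theorem sgnSum_add_one (f : ℤ → ℤ) (b : ℤ) : sgnSum f (b + 1) = sgnSum f b + f b := by
  unfold sgnSum
  rcases le_or_gt 0 b with hb | hb
  · rw [← Finset.sum_Ico_add_eq_sum_Ico_add_one hb, Finset.Ico_eq_empty_of_le hb,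
      Finset.Ico_eq_empty_of_le (by omega : (0 : ℤ) ≤ b + 1)]
    ring
  · rw [← Finset.insert_Ico_add_one_left_eq_Ico hb, Finset.sum_insert (by simp),
      Finset.Ico_eq_empty_of_le hb.le, Finset.Ico_eq_empty_of_le (by omega : b + 1 ≤ 0)]
    ring

theorem sgnSum_monotone {f : ℤ → ℤ} (hf : ∀ k, 0 ≤ f k) : Monotone (sgnSum f) :=
  monotone_int_of_le_succ fun b => by
    rw [sgnSum_add_one]
    exact le_add_of_nonneg_right (hf b)

theorem gfun_injective (y z : ℤ → ℤ)
    (hy : ∀ k, y k = 0 ∨ y k = 1) (hz : ∀ k, z k = 0 ∨ z k = 1) :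
    Function.Injective (gfun y z) := by
  have nonneg {f : ℤ → ℤ} (hf : ∀ k, f k = 0 ∨ f k = 1) (k : ℤ) : 0 ≤ f k := by
    rcases hf k with h | h <;> simp [h]
  exact injective_add_sub_of_monotone (sgnSum_monotone (nonneg hy)) (sgnSum_monotone (nonneg hz))
end

section
/- For every point v ∈ ℤ² not in the image of g_{y,z}, all four nearest neighbors v + (1,0), v + (-1,0), v + (0,1), v + (0,-1) lie in the image of g_{y,z}. -/
def HasZeroOneSteps (f : ℤ → ℤ) : Prop :=
  ∀ b, f (b + 1) = f b ∨ f (b + 1) = f b + 1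

namespace HasZeroOneSteps

variable {f g : ℤ → ℤ}

theorem monotone (hf : HasZeroOneSteps f) : Monotone f :=
  monotone_int_of_le_succ fun b => by rcases hf b with h | h <;> omega

theorem comp (hg : HasZeroOneSteps g) (hf : HasZeroOneSteps f) : HasZeroOneSteps (g ∘ f) := by
  intro b
  simp only [Function.comp_apply]
  rcases hf b with h | h <;> rw [h]
  · exact Or.inl rfl
  · exact hg (f b)

theorem const_add (hf : HasZeroOneSteps f) (c : ℤ) : HasZeroOneSteps fun x => c + f x :=
  fun x => by dsimp only; rcases hf x with h | h <;> omega

theorem neg_comp_const_sub (hf : HasZeroOneSteps f) (c : ℤ) :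
    HasZeroOneSteps fun x => -f (c - x) := by
  intro x
  have h := hf (c - (x + 1))
  rw [show c - (x + 1) + 1 = c - x by ring] at h
  dsimp only
  omega

theorem sub_one_mem_and_add_one_mem_range_of_notMem (hf : HasZeroOneSteps f) {n : ℤ}
    (hn : n ∉ Set.range fun b => b + f b) :
    n - 1 ∈ Set.range (fun b => b + f b) ∧ n + 1 ∈ Set.range (fun b => b + f b) := by
  have hmono := hf.monotone
  obtain ⟨c, hc, hc_max⟩ := Int.exists_greatest_of_bdd (P := fun b => b + f b < n)
    ⟨max 0 (n - f 0), fun b hb => by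
      by_contra! h
      have := hmono (le_max_left _ _ |>.trans h.le)
      omega⟩
    ⟨min 0 (n - f 0 - 1), by
      have := hmono (min_le_left 0 (n - f 0 - 1))
      omega⟩
  have hc_succ : n ≤ c + 1 + f (c + 1) := not_lt.mp fun h => by linarith [hc_max _ h]
  have hc_succ_ne : c + 1 + f (c + 1) ≠ n := fun h => hn ⟨c + 1, h⟩
  -- the step from `c` to `c + 1` jumps over `n`, so it is a step of `2`
  rcases hf c with h | h
  · omega
  · exact ⟨⟨c, show c + f c = n - 1 by omega⟩,
      ⟨c + 1, show c + 1 + f (c + 1) = n + 1 by omega⟩⟩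

end HasZeroOneSteps

theorem hasZeroOneSteps_sgnSum {f : ℤ → ℤ} (hf : ∀ k, f k = 0 ∨ f k = 1) :
    HasZeroOneSteps (sgnSum f) :=
  fun b => by rw [sgnSum_add_one]; rcases hf b with h | h <;> omega

theorem mk_mem_range_gfun_iff_column (y z : ℤ → ℤ) (p t : ℤ) :
    (p, t) ∈ Set.range (gfun y z) ↔ t ∈ Set.range fun b => b - sgnSum y (p - sgnSum z b) := by
  constructor
  · rintro ⟨⟨a, b⟩, h⟩
    simp only [gfun, Prod.mk.injEq] at h
    exact ⟨b, by rw [← h.1]; simpa using h.2⟩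
  · rintro ⟨b, rfl⟩
    exact ⟨(p - sgnSum z b, b), by simp [gfun]⟩

theorem mk_mem_range_gfun_iff_row (y z : ℤ → ℤ) (s q : ℤ) :
    (s, q) ∈ Set.range (gfun y z) ↔ s ∈ Set.range fun a => a + sgnSum z (q + sgnSum y a) := by
  constructor
  · rintro ⟨⟨a, b⟩, h⟩
    simp only [gfun, Prod.mk.injEq] at h
    exact ⟨a, by rw [← h.2]; simpa using h.1⟩
  · rintro ⟨a, rfl⟩
    exact ⟨(a, q + sgnSum y a), by simp [gfun]⟩

theorem gfun_neighbors_of_not_mem (y z : ℤ → ℤ)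
    (hy : ∀ k, y k = 0 ∨ y k = 1) (hz : ∀ k, z k = 0 ∨ z k = 1)
    (v : ℤ × ℤ) (hv : v ∉ Set.range (gfun y z)) :
    v + (1, 0) ∈ Set.range (gfun y z) ∧
    v + (-1, 0) ∈ Set.range (gfun y z) ∧
    v + (0, 1) ∈ Set.range (gfun y z) ∧
    v + (0, -1) ∈ Set.range (gfun y z) := by
  obtain ⟨p, q⟩ := v
  have hSy := hasZeroOneSteps_sgnSum hy
  have hSz := hasZeroOneSteps_sgnSum hz
  obtain ⟨hleft, hright⟩ :=
    (hSz.comp (hSy.const_add q)).sub_one_mem_and_add_one_mem_range_of_notMem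
      (mt (mk_mem_range_gfun_iff_row y z p q).mpr hv)
  obtain ⟨hdown, hup⟩ :=
    ((hSy.neg_comp_const_sub p).comp hSz).sub_one_mem_and_add_one_mem_range_of_notMem
      (mt (mk_mem_range_gfun_iff_column y z p q).mpr hv)
  simp only [Prod.mk_add_mk, add_zero, ← sub_eq_add_neg]
  exact ⟨(mk_mem_range_gfun_iff_row y z _ q).mpr hright,
    (mk_mem_range_gfun_iff_row y z _ q).mpr hleft,
    (mk_mem_range_gfun_iff_column y z p _).mpr hup,
    (mk_mem_range_gfun_iff_column y z p _).mpr hdown⟩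
end

section
/- Let A be a finite alphabet, r ≥ 2, and τ : A → A^(r×r) a primitive substitution (i.e., there exists n ≥ 1 such that for all a, b ∈ A, the symbol b occurs in τⁿ(a)). Then the substitutive subshift X_τ is linearly recurrent: there exists a constant c ≥ 1 such that every globally valid ℓ×ℓ pattern of X_τ occurs in every globally valid (c·ℓ)×(c·ℓ) pattern of X_τ, for all ℓ ≥ 1. -/
section

variable {A : Type*}

/-- The `n`-th iterate of the `r × r` substitution `τ` applied to a letter,
viewed as a function on `ℤ²` whose meaningful domain is `[0, rⁿ)²`. -/
def subIter (r : ℕ) (τ : A → ℤ × ℤ → A) : ℕ → A → ℤ × ℤ → A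
  | 0, a, _ => a
  | n + 1, a, p =>
      τ (subIter r τ n a (p.1 / (r : ℤ), p.2 / (r : ℤ)))
        (p.1 % (r : ℤ), p.2 % (r : ℤ))

/-- The `ℓ × ℓ` pattern `p` occurs in the `m × m` pattern `q`
(both anchored at the origin). -/
def occursIn (p : ℤ × ℤ → A) (ℓ : ℕ) (q : ℤ × ℤ → A) (m : ℕ) : Prop :=
  ∃ v : ℤ × ℤ, 0 ≤ v.1 ∧ v.1 + ℓ ≤ m ∧ 0 ≤ v.2 ∧ v.2 + ℓ ≤ m ∧
    ∀ u : ℤ × ℤ, 0 ≤ u.1 → u.1 < ℓ → 0 ≤ u.2 → u.2 < ℓ →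
      q (u.1 + v.1, u.2 + v.2) = p u

/-- The substitutive subshift of `τ`: configurations all of whose square
subpatterns occur in some `τⁿ(a)`. -/
def substSubshift (r : ℕ) (τ : A → ℤ × ℤ → A) : Set (ℤ × ℤ → A) :=
  {x | ∀ ℓ : ℕ, ∀ v : ℤ × ℤ, ∃ n : ℕ, ∃ a : A,
    occursIn (fun u => x (u + v)) ℓ (subIter r τ n a) (r ^ n)}

/-- `p` is a globally valid `ℓ × ℓ` pattern of `X`. -/
def globallyValid (X : Set (ℤ × ℤ → A)) (p : ℤ × ℤ → A) (ℓ : ℕ) : Prop :=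
  ∃ x ∈ X, ∀ u : ℤ × ℤ, 0 ≤ u.1 → u.1 < ℓ → 0 ≤ u.2 → u.2 < ℓ → x u = p u

end

/-!
By primitivity and since there are finitely many `2 × 2` patterns, there is a level `N` such
that every legal `2 × 2` pattern occurs in `τᴺ(b)` for every letter `b`. Given a legal `ℓ × ℓ`
pattern `p`, choose `k` with `ℓ ≤ rᵏ ≤ rℓ`. Inside a large supertile, `p` meets at most `2 × 2`
blocks of level `k`, so `p` occurs in `τᵏ(ρ)` for a legal `2 × 2` pattern `ρ`, hence in every
`τᴺ⁺ᵏ(b)`. A legal square of side `2 rᴺ⁺¹ ℓ ≥ 2 rᴺ⁺ᵏ` contains a whole aligned supertile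
`τᴺ⁺ᵏ(b)`, hence contains `p`.
-/

open Filter

theorem exists_two_block_cover {R v ℓ M : ℤ} (hR : 0 < R) (hv : 0 ≤ v) (hvM : v + ℓ ≤ M * R)
    (hℓ : ℓ ≤ R) (hM : 2 ≤ M) :
    ∃ i : ℤ, 0 ≤ i ∧ i + 2 ≤ M ∧ i * R ≤ v ∧ v + ℓ ≤ i * R + 2 * R := by
  rcases le_or_gt (v / R) (M - 2) with h | h
  · refine ⟨v / R, Int.ediv_nonneg hv hR.le, by omega, Int.ediv_mul_le v hR.ne', ?_⟩
    nlinarith [Int.lt_ediv_add_one_mul_self v hR]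
  · refine ⟨M - 2, by omega, by omega, ?_, by linarith⟩
    nlinarith [Int.ediv_mul_le v hR.ne']

theorem exists_block_inside {R v L : ℤ} (hR : 0 < R) (hL : 2 * R ≤ L) :
    ∃ j : ℤ, v ≤ j * R ∧ j * R + R ≤ v + L := by
  refine ⟨-((-v) / R), ?_, ?_⟩
  · nlinarith [Int.ediv_mul_le (-v) hR.ne']
  · nlinarith [Int.lt_ediv_add_one_mul_self (-v) hR]

section

variable {A : Type*}

theorem occursIn.congr {p p' q : ℤ × ℤ → A} {ℓ m : ℕ} (h : occursIn p ℓ q m)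
    (hp : ∀ u : ℤ × ℤ, 0 ≤ u.1 → u.1 < ℓ → 0 ≤ u.2 → u.2 < ℓ → p u = p' u) :
    occursIn p' ℓ q m := by
  obtain ⟨v, h1, h2, h3, h4, hv⟩ := h
  exact ⟨v, h1, h2, h3, h4, fun u u1 u2 u3 u4 => (hv u u1 u2 u3 u4).trans (hp u u1 u2 u3 u4)⟩

theorem occursIn.trans {p q s : ℤ × ℤ → A} {ℓ m t : ℕ} (hpq : occursIn p ℓ q m)
    (hqs : occursIn q m s t) : occursIn p ℓ s t := by
  obtain ⟨v, v1, v2, v3, v4, hv⟩ := hpq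
  obtain ⟨w, w1, w2, w3, w4, hw⟩ := hqs
  refine ⟨(v.1 + w.1, v.2 + w.2), by omega, by omega, by omega, by omega, fun u u1 u2 u3 u4 => ?_⟩
  rw [← hv u u1 u2 u3 u4, ← hw _ (by omega) (by omega) (by omega) (by omega)]
  simp only [add_assoc]

theorem occursIn_shift (q : ℤ × ℤ → A) {ℓ m : ℕ} {i : ℤ × ℤ} (h1 : 0 ≤ i.1) (h2 : i.1 + ℓ ≤ m)
    (h3 : 0 ≤ i.2) (h4 : i.2 + ℓ ≤ m) : occursIn (fun e => q (e + i)) ℓ q m :=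
  ⟨i, h1, h2, h3, h4, fun _ _ _ _ _ => rfl⟩

variable {r : ℕ} {τ : A → ℤ × ℤ → A}

/-- `τᵏ` applied to a pattern: the letter at `i` is replaced by the block `τᵏ(ρ i)` at `rᵏ • i`. -/
def subIterPattern (r : ℕ) (τ : A → ℤ × ℤ → A) (k : ℕ) (ρ : ℤ × ℤ → A) : ℤ × ℤ → A :=
  fun u => subIter r τ k (ρ (u.1 / (r : ℤ) ^ k, u.2 / (r : ℤ) ^ k))
    (u.1 % (r : ℤ) ^ k, u.2 % (r : ℤ) ^ k)

theorem subIter_add_apply (hr : 0 < r) (m k : ℕ) (a : A) (i : ℤ × ℤ) {u : ℤ × ℤ}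
    (h1 : 0 ≤ u.1) (h2 : u.1 < (r : ℤ) ^ k) (h3 : 0 ≤ u.2) (h4 : u.2 < (r : ℤ) ^ k) :
    subIter r τ (m + k) a (u.1 + i.1 * (r : ℤ) ^ k, u.2 + i.2 * (r : ℤ) ^ k) =
      subIter r τ k (subIter r τ m a i) u := by
  induction k generalizing u with
  | zero =>
    rw [pow_zero] at h2 h4
    obtain ⟨u1, u2⟩ := u
    obtain rfl : u1 = 0 := by dsimp only at h1 h2; omega
    obtain rfl : u2 = 0 := by dsimp only at h3 h4; omega
    simp [subIter]
  | succ k ih =>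
    have hr' : (r : ℤ) ≠ 0 := by positivity
    have hdigit : ∀ x y : ℤ, (x + y * (r : ℤ) ^ (k + 1)) / r = x / r + y * (r : ℤ) ^ k ∧
        (x + y * (r : ℤ) ^ (k + 1)) % r = x % r := fun x y => by
      rw [pow_succ, ← mul_assoc]
      exact ⟨Int.add_mul_ediv_right _ _ hr', Int.add_mul_emod_self_right _ _ _⟩
    have hquot : ∀ x : ℤ, 0 ≤ x → x < (r : ℤ) ^ (k + 1) → 0 ≤ x / r ∧ x / r < (r : ℤ) ^ k :=
      fun x hx0 hx => ⟨Int.ediv_nonneg hx0 (by positivity),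
        (Int.ediv_lt_iff_lt_mul (by positivity)).2 (by rwa [← pow_succ])⟩
    obtain ⟨q1, q2⟩ := hquot _ h1 h2
    obtain ⟨q3, q4⟩ := hquot _ h3 h4
    change τ (subIter r τ (m + k) a _) _ = τ (subIter r τ k _ _) _
    rw [(hdigit _ _).1, (hdigit _ _).1, (hdigit _ _).2, (hdigit _ _).2,
      ih (u := (u.1 / r, u.2 / r)) q1 q2 q3 q4]

theorem subIterPattern_subIter (hr : 0 < r) (m k : ℕ) (a : A) :
    subIterPattern r τ k (subIter r τ m a) = subIter r τ (m + k) a := by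
  have hR : (0 : ℤ) < (r : ℤ) ^ k := by positivity
  funext u
  rw [subIterPattern, ← subIter_add_apply hr m k a _ (Int.emod_nonneg _ hR.ne')
    (Int.emod_lt_of_pos _ hR) (Int.emod_nonneg _ hR.ne') (Int.emod_lt_of_pos _ hR),
    Int.emod_add_ediv_mul, Int.emod_add_ediv_mul]

theorem subIterPattern_shift (hr : 0 < r) (k : ℕ) (ρ : ℤ × ℤ → A) (i u : ℤ × ℤ) :
    subIterPattern r τ k (fun e => ρ (e + i)) u =
      subIterPattern r τ k ρ (u.1 + i.1 * (r : ℤ) ^ k, u.2 + i.2 * (r : ℤ) ^ k) := by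
  have hR : (r : ℤ) ^ k ≠ 0 := by positivity
  simp only [subIterPattern, Int.add_mul_ediv_right _ _ hR, Int.add_mul_emod_self_right]
  rfl

theorem subIterPattern_congr (hr : 0 < r) (k : ℕ) {ρ ρ' : ℤ × ℤ → A} {ℓ : ℕ}
    (h : ∀ u : ℤ × ℤ, 0 ≤ u.1 → u.1 < ℓ → 0 ≤ u.2 → u.2 < ℓ → ρ u = ρ' u)
    {u : ℤ × ℤ} (h1 : 0 ≤ u.1) (h2 : u.1 < ↑(ℓ * r ^ k)) (h3 : 0 ≤ u.2)
    (h4 : u.2 < ↑(ℓ * r ^ k)) :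
    subIterPattern r τ k ρ u = subIterPattern r τ k ρ' u := by
  have hR : (0 : ℤ) < (r : ℤ) ^ k := by positivity
  push_cast at h2 h4
  rw [subIterPattern, subIterPattern, h _ (Int.ediv_nonneg h1 hR.le)
    ((Int.ediv_lt_iff_lt_mul hR).2 h2) (Int.ediv_nonneg h3 hR.le)
    ((Int.ediv_lt_iff_lt_mul hR).2 h4)]

theorem occursIn_subIterPattern (hr : 0 < r) (k : ℕ) {ρ q : ℤ × ℤ → A} {ℓ m : ℕ}
    (h : occursIn ρ ℓ q m) :
    occursIn (subIterPattern r τ k ρ) (ℓ * r ^ k) (subIterPattern r τ k q) (m * r ^ k) := by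
  obtain ⟨v, v1, v2, v3, v4, hv⟩ := h
  have hR : (0 : ℤ) < (r : ℤ) ^ k := by positivity
  refine ⟨(v.1 * (r : ℤ) ^ k, v.2 * (r : ℤ) ^ k), by positivity, ?_, by positivity, ?_,
    fun u u1 u2 u3 u4 => ?_⟩
  · push_cast; nlinarith
  · push_cast; nlinarith
  rw [← subIterPattern_shift hr k q v]
  exact subIterPattern_congr hr k hv u1 u2 u3 u4

theorem occursIn_subIter_of_mem (hr : 0 < r) {m : ℕ} (b : A) {i : ℤ × ℤ}
    (h1 : 0 ≤ i.1) (h2 : i.1 < (r : ℤ) ^ m) (h3 : 0 ≤ i.2) (h4 : i.2 < (r : ℤ) ^ m) (k : ℕ) :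
    occursIn (subIter r τ k (subIter r τ m b i)) (r ^ k) (subIter r τ (m + k) b) (r ^ (m + k)) := by
  have hR : (0 : ℤ) < (r : ℤ) ^ k := by positivity
  refine ⟨(i.1 * (r : ℤ) ^ k, i.2 * (r : ℤ) ^ k), by positivity, ?_, by positivity, ?_,
    fun u u1 u2 u3 u4 => ?_⟩
  · push_cast; rw [pow_add]; nlinarith
  · push_cast; rw [pow_add]; nlinarith
  push_cast at u2 u4
  exact subIter_add_apply hr m k b i u1 u2 u3 u4

def IsLegal (r : ℕ) (τ : A → ℤ × ℤ → A) (ρ : ℤ × ℤ → A) (ℓ : ℕ) : Prop :=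
  ∃ n a, occursIn ρ ℓ (subIter r τ n a) (r ^ n)

def IsPrimitiveAt (r : ℕ) (τ : A → ℤ × ℤ → A) (n : ℕ) : Prop :=
  ∀ a b : A, ∃ u : ℤ × ℤ, 0 ≤ u.1 ∧ u.1 < (r : ℤ) ^ n ∧ 0 ≤ u.2 ∧ u.2 < (r : ℤ) ^ n ∧
    subIter r τ n a u = b

theorem globallyValid.isLegal {p : ℤ × ℤ → A} {ℓ : ℕ}
    (h : globallyValid (substSubshift r τ) p ℓ) : IsLegal r τ p ℓ := by
  obtain ⟨x, hx, hxp⟩ := h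
  obtain ⟨n, a, hn⟩ := hx ℓ 0
  exact ⟨n, a, hn.congr fun u u1 u2 u3 u4 => by simpa using hxp u u1 u2 u3 u4⟩

theorem IsLegal.eventually_occursIn (hr : 0 < r) {n₀ : ℕ} (hprim : IsPrimitiveAt r τ n₀)
    {p : ℤ × ℤ → A} {ℓ : ℕ} (h : IsLegal r τ p ℓ) :
    ∀ᶠ N in atTop, ∀ b : A, occursIn p ℓ (subIter r τ N b) (r ^ N) := by
  obtain ⟨n, a, hp⟩ := h
  refine eventually_atTop.2 ⟨n₀ + n, fun N hN b => ?_⟩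
  obtain ⟨t, rfl⟩ := Nat.exists_eq_add_of_le' hN
  obtain ⟨u, u1, u2, u3, u4, hu⟩ := hprim (subIter r τ t b 0) a
  have hcorner := occursIn_subIter_of_mem (τ := τ) (m := t) (i := 0) hr b le_rfl
    (by rw [Prod.fst_zero]; positivity) le_rfl (by rw [Prod.snd_zero]; positivity) (n₀ + n)
  have hmid := occursIn_subIter_of_mem (τ := τ) hr (subIter r τ t b 0) u1 u2 u3 u4 n
  rw [hu] at hmid
  exact hp.trans (hmid.trans hcorner)

theorem eventually_forall_isLegal_occursIn [Finite A] (hr : 0 < r) {n₀ : ℕ}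
    (hprim : IsPrimitiveAt r τ n₀) (ℓ : ℕ) :
    ∀ᶠ N in atTop, ∀ ρ : ℤ × ℤ → A, IsLegal r τ ρ ℓ → ∀ b : A,
      occursIn ρ ℓ (subIter r τ N b) (r ^ N) := by
  let window (ρ : ℤ × ℤ → A) : Fin ℓ × Fin ℓ → A := fun i => ρ (i.1, i.2)
  have hwindow : ∀ ρ ρ', window ρ = window ρ' →
      ∀ u : ℤ × ℤ, 0 ≤ u.1 → u.1 < ℓ → 0 ≤ u.2 → u.2 < ℓ → ρ u = ρ' u := by
    intro ρ ρ' h u u1 u2 u3 u4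
    have := congrFun h (⟨u.1.toNat, by omega⟩, ⟨u.2.toNat, by omega⟩)
    simpa [window, Int.toNat_of_nonneg u1, Int.toNat_of_nonneg u3] using this
  -- occurrence only depends on the window, and there are finitely many windows
  have hfiber : ∀ g : Fin ℓ × Fin ℓ → A, ∀ᶠ N in atTop, ∀ ρ, window ρ = g →
      IsLegal r τ ρ ℓ → ∀ b, occursIn ρ ℓ (subIter r τ N b) (r ^ N) := by
    intro g
    by_cases hg : ∃ ρ₀, window ρ₀ = g ∧ IsLegal r τ ρ₀ ℓ
    · obtain ⟨ρ₀, rfl, h₀⟩ := hg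
      filter_upwards [h₀.eventually_occursIn hr hprim] with N hN ρ hρ _ b
      exact (hN b).congr (hwindow ρ₀ ρ hρ.symm)
    · exact Eventually.of_forall fun N ρ hρ hl => (hg ⟨ρ, hρ, hl⟩).elim
  filter_upwards [eventually_all.2 hfiber] with N hN ρ hρ
  exact hN _ ρ rfl hρ

theorem occursIn.exists_two_block_window (hr : 0 < r) {p ρ : ℤ × ℤ → A} {ℓ k M : ℕ}
    (hM : 2 ≤ M) (hℓ : ℓ ≤ r ^ k) (h : occursIn p ℓ (subIterPattern r τ k ρ) (M * r ^ k)) :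
    ∃ i : ℤ × ℤ, occursIn (fun e => ρ (e + i)) 2 ρ M ∧
      occursIn p ℓ (subIterPattern r τ k (fun e => ρ (e + i))) (2 * r ^ k) := by
  obtain ⟨v, v1, v2, v3, v4, hv⟩ := h
  have hR : (0 : ℤ) < (r : ℤ) ^ k := by positivity
  have hℓ' : (ℓ : ℤ) ≤ (r : ℤ) ^ k := by exact_mod_cast hℓ
  have hM' : (2 : ℤ) ≤ M := by exact_mod_cast hM
  push_cast at v2 v4
  obtain ⟨i₁, hi₁, hi₁M, hi₁v, hvi₁⟩ := exists_two_block_cover hR v1 v2 hℓ' hM'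
  obtain ⟨i₂, hi₂, hi₂M, hi₂v, hvi₂⟩ := exists_two_block_cover hR v3 v4 hℓ' hM'
  refine ⟨(i₁, i₂), occursIn_shift ρ hi₁ (by push_cast; exact hi₁M) hi₂ (by push_cast; exact hi₂M),
    (v.1 - i₁ * (r : ℤ) ^ k, v.2 - i₂ * (r : ℤ) ^ k), by simp only; linarith, ?_,
    by simp only; linarith, ?_, fun u u1 u2 u3 u4 => ?_⟩
  · push_cast; linarith
  · push_cast; linarith
  rw [subIterPattern_shift hr, ← hv u u1 u2 u3 u4]
  congr 1
  ext <;> dsimp only <;> ring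

theorem IsLegal.exists_subIter_occursIn (hr : 1 < r) {q : ℤ × ℤ → A} {L s : ℕ}
    (hq : IsLegal r τ q L) (hL : 2 * r ^ s ≤ L) :
    ∃ b : A, occursIn (subIter r τ s b) (r ^ s) q L := by
  obtain ⟨n, a, v, v1, v2, v3, v4, hv⟩ := hq
  have hsn : s ≤ n := by
    have hLn : L ≤ r ^ n := by exact_mod_cast (show (L : ℤ) ≤ ((r ^ n : ℕ) : ℤ) by linarith)
    have hs : 0 < r ^ s := by positivity
    exact ((Nat.pow_lt_pow_iff_right hr).1 (by omega)).le
  obtain ⟨t, rfl⟩ := Nat.exists_eq_add_of_le' hsn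
  have hR : (0 : ℤ) < (r : ℤ) ^ s := by positivity
  have hL' : 2 * (r : ℤ) ^ s ≤ L := by exact_mod_cast hL
  obtain ⟨j₁, hvj₁, hj₁v⟩ := exists_block_inside (v := v.1) hR hL'
  obtain ⟨j₂, hvj₂, hj₂v⟩ := exists_block_inside (v := v.2) hR hL'
  refine ⟨subIter r τ t a (j₁, j₂), (j₁ * (r : ℤ) ^ s - v.1, j₂ * (r : ℤ) ^ s - v.2),
    by simp only; linarith, ?_, by simp only; linarith, ?_, fun u u1 u2 u3 u4 => ?_⟩
  · push_cast; linarith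
  · push_cast; linarith
  push_cast at u2 u4
  rw [← subIter_add_apply (by omega) t s a (j₁, j₂) u1 u2 u3 u4,
    ← hv _ (by simp only; linarith) (by simp only; linarith) (by simp only; linarith)
      (by simp only; linarith)]
  congr 1
  ext <;> dsimp only <;> ring

end

theorem primitive_substitution_linearly_recurrent
    (A : Type) [Fintype A] (r : ℕ) (hr : 2 ≤ r) (τ : A → ℤ × ℤ → A)
    (hprim : ∃ n : ℕ, 1 ≤ n ∧ ∀ a b : A, ∃ u : ℤ × ℤ,
      0 ≤ u.1 ∧ u.1 < (r : ℤ) ^ n ∧ 0 ≤ u.2 ∧ u.2 < (r : ℤ) ^ n ∧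
      subIter r τ n a u = b) :
    ∃ c : ℕ, 1 ≤ c ∧ ∀ ℓ : ℕ, 1 ≤ ℓ → ∀ p q : ℤ × ℤ → A,
      globallyValid (substSubshift r τ) p ℓ →
      globallyValid (substSubshift r τ) q (c * ℓ) →
      occursIn p ℓ q (c * ℓ) := by
  obtain ⟨n₀, -, hprim⟩ := hprim
  have hr₀ : 0 < r := by omega
  obtain ⟨N, hN⟩ := (eventually_forall_isLegal_occursIn hr₀ hprim 2).exists
  refine ⟨2 * r ^ (N + 1), Nat.one_le_iff_ne_zero.2 (by positivity), fun ℓ hℓ p q hp hq => ?_⟩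
  obtain ⟨k, hℓk, hkℓ⟩ : ∃ k, ℓ ≤ r ^ k ∧ r ^ k ≤ r * ℓ :=
    ⟨Nat.log r ℓ + 1, (Nat.lt_pow_succ_log_self hr ℓ).le,
      by rw [pow_succ']; exact Nat.mul_le_mul_left r (Nat.pow_log_le_self r (by omega))⟩
  obtain ⟨n, a, hpn⟩ : ∃ n a,
      occursIn p ℓ (subIterPattern r τ k (subIter r τ (n + 1) a)) (r ^ (n + 1) * r ^ k) := by
    obtain ⟨-, a, -⟩ := hp.isLegal
    obtain ⟨n, hn⟩ := eventually_atTop.1 (hp.isLegal.eventually_occursIn hr₀ hprim)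
    refine ⟨n, a, ?_⟩
    rw [subIterPattern_subIter hr₀, ← pow_add]
    exact hn _ (by omega) a
  obtain ⟨i, hρ, hpρ⟩ :=
    hpn.exists_two_block_window hr₀ (hr.trans (Nat.le_self_pow n.succ_ne_zero r)) hℓk
  obtain ⟨b, hb⟩ := hq.isLegal.exists_subIter_occursIn (s := N + k) hr (by
    rw [pow_add, pow_succ, mul_assoc, mul_assoc]; gcongr)
  have hρb := occursIn_subIterPattern (τ := τ) hr₀ k (hN _ ⟨n + 1, a, hρ⟩ b)
  rw [subIterPattern_subIter hr₀, ← pow_add] at hρb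
  exact hpρ.trans (hρb.trans hb)
end

section
/- Let X be a ℤ² subshift and suppose X is linearly recurrent with constant c (every globally valid ℓ×ℓ pattern occurs in every globally valid cℓ×cℓ pattern). Then X is weakly linearly block transitive: there exists K such that for all n, all globally valid n×n patterns p, q, and all v ∈ ℤ² with ‖v‖_∞ ≥ K·n, there exists w ∈ ℤ² with ‖w − v‖_∞ ≤ K·n such that some configuration x ∈ X contains p at position (0,0) and q at position w. -/
/-!
Take `K = c`. Given a configuration `x` carrying `p` at the origin, the `cn × cn` window of `x`
at `v` is globally valid, so by linear recurrence `q` occurs in it; that occurrence lies within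
distance `cn` of `v`.
-/

section

variable {A : Type*}

/-- The configuration `x` contains the `ℓ × ℓ` pattern `p` at position `w`. -/
def containsAt (x : ℤ × ℤ → A) (p : ℤ × ℤ → A) (ℓ : ℕ) (w : ℤ × ℤ) : Prop :=
  ∀ u : ℤ × ℤ, 0 ≤ u.1 → u.1 < ℓ → 0 ≤ u.2 → u.2 < ℓ → x (u + w) = p u

end

section

variable {A : Type*}

def LinearlyRecurrent (X : Set (ℤ × ℤ → A)) (c : ℕ) : Prop :=
  ∀ ℓ : ℕ, 1 ≤ ℓ → ∀ p q : ℤ × ℤ → A,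
    globallyValid X p ℓ → globallyValid X q (c * ℓ) → occursIn p ℓ q (c * ℓ)

theorem globallyValid_of_mem {X : Set (ℤ × ℤ → A)} {x : ℤ × ℤ → A} (hx : x ∈ X) (m : ℕ) :
    globallyValid X x m :=
  ⟨x, hx, fun _ _ _ _ _ => rfl⟩

theorem containsAt_zero_of_eq {x p : ℤ × ℤ → A} {ℓ : ℕ}
    (hxp : ∀ u : ℤ × ℤ, 0 ≤ u.1 → u.1 < ℓ → 0 ≤ u.2 → u.2 < ℓ → x u = p u) :
    containsAt x p ℓ (0, 0) := by
  intro u h₁ h₂ h₃ h₄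
  rw [Prod.mk_zero_zero, add_zero]
  exact hxp u h₁ h₂ h₃ h₄

theorem occursIn.exists_containsAt {x p : ℤ × ℤ → A} {ℓ m : ℕ} {v : ℤ × ℤ}
    (h : occursIn p ℓ (fun u => x (u + v)) m) :
    ∃ s : ℤ × ℤ, (0 ≤ s.1 ∧ s.1 + ℓ ≤ m ∧ 0 ≤ s.2 ∧ s.2 + ℓ ≤ m) ∧ containsAt x p ℓ (s + v) := by
  obtain ⟨s, h₁, h₂, h₃, h₄, hs⟩ := h
  refine ⟨s, ⟨h₁, h₂, h₃, h₄⟩, fun u hu₁ hu₂ hu₃ hu₄ => ?_⟩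
  rw [← hs u hu₁ hu₂ hu₃ hu₄, ← add_assoc]
  rfl

theorem LinearlyRecurrent.exists_containsAt_near {X : Set (ℤ × ℤ → A)} {c : ℕ}
    (hrec : LinearlyRecurrent X c) (hinv : ∀ v : ℤ × ℤ, ∀ x ∈ X, (fun u => x (u + v)) ∈ X)
    {ℓ : ℕ} (hℓ : 1 ≤ ℓ) {q : ℤ × ℤ → A} (hq : globallyValid X q ℓ)
    {x : ℤ × ℤ → A} (hx : x ∈ X) (v : ℤ × ℤ) :
    ∃ s : ℤ × ℤ, max |s.1| |s.2| ≤ (c : ℤ) * ℓ ∧ containsAt x q ℓ (s + v) := by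
  obtain ⟨s, ⟨h₁, h₂, h₃, h₄⟩, hs⟩ :=
    (hrec ℓ hℓ q _ hq (globallyValid_of_mem (hinv v x hx) _)).exists_containsAt
  refine ⟨s, ?_, hs⟩
  push_cast at h₂ h₄
  rw [max_le_iff, abs_of_nonneg h₁, abs_of_nonneg h₃]
  constructor <;> linarith

end

theorem linearly_recurrent_implies_weakly_linearly_block_transitive_general
    (A : Type) (X : Set ((ℤ × ℤ) → A))
    (hinv : ∀ v : ℤ × ℤ, ∀ x ∈ X, (fun u => x (u + v)) ∈ X)
    (c : ℕ) (hc : 1 ≤ c)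
    (hrec : ∀ ℓ : ℕ, 1 ≤ ℓ → ∀ p q : ℤ × ℤ → A,
      globallyValid X p ℓ → globallyValid X q (c * ℓ) → occursIn p ℓ q (c * ℓ)) :
    ∃ K : ℕ, 1 ≤ K ∧ ∀ n : ℕ, 1 ≤ n → ∀ p q : ℤ × ℤ → A,
      globallyValid X p n → globallyValid X q n →
      ∀ v : ℤ × ℤ, (K : ℤ) * n ≤ max |v.1| |v.2| →
        ∃ w : ℤ × ℤ, max |w.1 - v.1| |w.2 - v.2| ≤ (K : ℤ) * n ∧
          ∃ x ∈ X, containsAt x p n (0, 0) ∧ containsAt x q n w := by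
  refine ⟨c, hc, fun n hn p q hp hq v _ => ?_⟩
  obtain ⟨x, hx, hxp⟩ := hp
  obtain ⟨s, hs, hxq⟩ := LinearlyRecurrent.exists_containsAt_near hrec hinv hn hq hx v
  refine ⟨s + v, ?_, x, hx, containsAt_zero_of_eq hxp, hxq⟩
  simpa using hs

theorem linearly_recurrent_implies_weakly_linearly_block_transitive
    (A : Type) [Fintype A] (X : Set ((ℤ × ℤ) → A)) (hne : X.Nonempty)
    (hinv : ∀ v : ℤ × ℤ, ∀ x ∈ X, (fun u => x (u + v)) ∈ X)
    (c : ℕ) (hc : 1 ≤ c)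
    (hrec : ∀ ℓ : ℕ, 1 ≤ ℓ → ∀ p q : ℤ × ℤ → A,
      globallyValid X p ℓ → globallyValid X q (c * ℓ) → occursIn p ℓ q (c * ℓ)) :
    ∃ K : ℕ, 1 ≤ K ∧ ∀ n : ℕ, 1 ≤ n → ∀ p q : ℤ × ℤ → A,
      globallyValid X p n → globallyValid X q n →
      ∀ v : ℤ × ℤ, (K : ℤ) * n ≤ max |v.1| |v.2| →
        ∃ w : ℤ × ℤ, max |w.1 - v.1| |w.2 - v.2| ≤ (K : ℤ) * n ∧
          ∃ x ∈ X, containsAt x p n (0, 0) ∧ containsAt x q n w :=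
  linearly_recurrent_implies_weakly_linearly_block_transitive_general A X hinv c hc hrec
end
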